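/- arXiv:1405.0998 — 2 statements merged into one kernel-verified Lean document; each statement's English description precedes it below -/
import Mathlib

section
/- For all integers k ≥ 0 and j ≥ 0, let g = z · ∏_{s=−j}^{k+j} (x − s·z)(y − s·z) ∈ S, the defining polynomial of the cone over the grid arrangement A_0. Then D_0(g) is a free S-module of rank 2 admitting a basis consisting of two derivations each homogeneous of degree k+2j+1. (Equivalently, T_{A_0} ≅ O_{ℙ²}(−k−2j−1)^2.) -/
open MvPolynomial

noncomputable section

abbrev S := MvPolynomial (Fin 3) ℝ

/-- The module of logarithmic derivations annihilating `f`. -/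
def D0 (f : S) : Submodule S (Derivation ℝ S S) where
  carrier := {θ | θ f = 0}
  add_mem' := by
    intro a b ha hb
    simp only [Set.mem_setOf_eq] at *
    simp [ha, hb]
  zero_mem' := by simp
  smul_mem' := by
    intro c θ hθ
    simp only [Set.mem_setOf_eq] at *
    simp [hθ]

/-- A derivation is homogeneous of degree `d` if its values on the variables are
homogeneous of degree `d`. -/
def IsHomogDer (θ : Derivation ℝ S S) (d : ℕ) : Prop :=
  ∀ i : Fin 3, (θ (X i)).IsHomogeneous d

/-- Defining polynomial of the cone over the grid arrangement `A_0`. -/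
def gridPoly (j k : ℕ) : S :=
  X 2 * ∏ s ∈ Finset.Icc (-(j : ℤ)) ((k : ℤ) + j),
    ((X 0 - C (s : ℝ) * X 2) * (X 1 - C (s : ℝ) * X 2))

/-!
Write `(x, y, z) = (X 0, X 1, X 2)` and `g = z · P₀ · P₁` with `P₀ = ∏ₛ (x - s z)` and
`P₁ = ∏ₛ (y - s z)`, homogeneous of degree `n = 1 + 2 #T`. Since `∂ₓ g = z P₁ ∂ₓ P₀`, the
derivation `θ₀ = (∂ₓ P₀) E - n P₀ ∂ₓ` (with `E` the Euler derivation) kills `g`, and likewise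
`θ₁ = (∂_y P₁) E - n P₁ ∂_y`.

Conversely, let `δ g = 0`. As `g` is a product of pairwise non-associated linear primes, each
factor `α` satisfies `α ∣ δ α`, hence `z P₀ ∣ x δz - z δx` and `z P₁ ∣ y δz - z δy`; call the
quotients `u₀, u₁`. Evaluating `z δ - (δ z) E` on `g` gives `n δz = z (u₀ ∂ₓ P₀ + u₁ ∂_y P₁)`,
and then `n δ = u₀ θ₀ + u₁ θ₁`. The values of `θ₀, θ₁` on `x, y, z` show they are independent.
-/

theorem Prime.dvd_derivation_of_dvd_derivation_mul {R A : Type*} [CommSemiring R] [CommRing A]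
    [Algebra R A] (D : Derivation R A A) {p h : A} (hp : Prime p) (hh : ¬ p ∣ h)
    (hD : p ∣ D (p * h)) : p ∣ D p := by
  rw [Derivation.leibniz, smul_eq_mul, smul_eq_mul] at hD
  exact (hp.dvd_or_dvd ((dvd_add_right (dvd_mul_right p _)).mp hD)).resolve_left hh

theorem Derivation.finsetSum_apply {R A M ι : Type*} [CommSemiring R] [CommSemiring A]
    [Algebra R A] [AddCommMonoid M] [Module A M] [Module R M] (s : Finset ι)
    (D : ι → Derivation R A M) (a : A) : (∑ i ∈ s, D i) a = ∑ i ∈ s, D i a := by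
  simp only [← Derivation.coeFnAddMonoidHom_apply, map_sum, Finset.sum_apply]

namespace MvPolynomial

variable {σ R : Type*}

theorem prime_X_sub_C_mul_X {K : Type*} [Field K] {i j : σ} (h : i ≠ j) (c : K) :
    Prime (X i - C c * X j : MvPolynomial σ K) := by
  have hcoeff : coeff (Finsupp.single i 1) (X i - C c * X j : MvPolynomial σ K) = 1 := by
    classical
    simp [coeff_X, coeff_C_mul, Finsupp.single_left_inj one_ne_zero, h.symm]
  have hne : (X i - C c * X j : MvPolynomial σ K) ≠ 0 := fun h0 => by simp [h0] at hcoeff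
  have hhom : (X i - C c * X j : MvPolynomial σ K).IsHomogeneous 1 :=
    (isHomogeneous_X K i).sub (by simpa using (isHomogeneous_C σ c).mul (isHomogeneous_X K j))
  exact (irreducible_of_totalDegree_eq_one (hhom.totalDegree hne)
    fun x hx => isUnit_of_dvd_one (hcoeff ▸ hx _)).prime

theorem not_dvd_of_eval_eq_zero [CommSemiring R] {p q : MvPolynomial σ R} (v : σ → R)
    (hp : eval v p = 0) (hq : eval v q ≠ 0) : ¬ p ∣ q := by
  rintro ⟨c, rfl⟩
  simp [hp] at hq

theorem IsHomogeneous.pderiv_mul_X [CommSemiring R] {φ : MvPolynomial σ R} {n : ℕ}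
    (h : φ.IsHomogeneous n) (i j : σ) : (pderiv i φ * X j).IsHomogeneous n := by
  obtain _ | n := n
  · rw [totalDegree_eq_zero_iff_eq_C.mp ((totalDegree_zero_iff_isHomogeneous σ).mpr h),
      pderiv_C, zero_mul]
    exact isHomogeneous_zero σ R 0
  · exact h.pderiv.mul (isHomogeneous_X R j)

variable [Fintype σ] [CommRing R]

theorem derivation_eq_sum_pderiv_mul (D : Derivation R (MvPolynomial σ R) (MvPolynomial σ R))
    (p : MvPolynomial σ R) : D p = ∑ i, pderiv i p * D (X i) := by
  classical
  suffices D = ∑ i, D (X i) • pderiv i by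
    conv_lhs => rw [this]
    simp [Derivation.finsetSum_apply, mul_comm]
  refine derivation_ext fun j => ?_
  simp [Derivation.finsetSum_apply, pderiv_X, Pi.single_apply]

def eulerDerivation : Derivation R (MvPolynomial σ R) (MvPolynomial σ R) :=
  ∑ i : σ, (X i : MvPolynomial σ R) • pderiv i

theorem eulerDerivation_apply (p : MvPolynomial σ R) :
    eulerDerivation p = ∑ i, X i * pderiv i p := by
  simp [eulerDerivation, Derivation.finsetSum_apply]

@[simp]
theorem eulerDerivation_X (j : σ) : eulerDerivation (X j : MvPolynomial σ R) = X j := by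
  classical
  simp [eulerDerivation_apply, pderiv_X, Pi.single_apply]

theorem IsHomogeneous.eulerDerivation_apply {p : MvPolynomial σ R} {n : ℕ}
    (h : p.IsHomogeneous n) : eulerDerivation p = n * p := by
  rw [MvPolynomial.eulerDerivation_apply, h.sum_X_mul_pderiv, nsmul_eq_mul]

def factorDerivation (P : MvPolynomial σ R) (n : ℕ) (i : σ) :
    Derivation R (MvPolynomial σ R) (MvPolynomial σ R) :=
  pderiv i P • eulerDerivation - ((n : MvPolynomial σ R) * P) • pderiv i

theorem factorDerivation_apply (P : MvPolynomial σ R) (n : ℕ) (i : σ) (p : MvPolynomial σ R) :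
    factorDerivation P n i p = pderiv i P * eulerDerivation p - n * P * pderiv i p := by
  simp [factorDerivation]

theorem factorDerivation_apply_eq_zero {P f : MvPolynomial σ R} {n : ℕ} {i : σ}
    (hf : f.IsHomogeneous n) (h : f * pderiv i P = P * pderiv i f) :
    factorDerivation P n i f = 0 := by
  rw [factorDerivation_apply, hf.eulerDerivation_apply]
  linear_combination (n : MvPolynomial σ R) * h

theorem IsHomogeneous.factorDerivation_X {P : MvPolynomial σ R} {d : ℕ} (hP : P.IsHomogeneous d)
    (n : ℕ) (i j : σ) : (factorDerivation P n i (X j)).IsHomogeneous d := by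
  rw [factorDerivation_apply, eulerDerivation_X]
  refine (hP.pderiv_mul_X i j).sub ?_
  simpa using ((isHomogeneous_C σ (n : R)).mul hP).mul (isHomogeneous_X R j).pderiv

end MvPolynomial

open Finset

def lineProd (T : Finset ℝ) (i : Fin 3) : S := ∏ s ∈ T, (X i - C s * X 2)

section lineProd

variable (T : Finset ℝ) (i : Fin 3)

theorem eval_lineProd (v : Fin 3 → ℝ) : eval v (lineProd T i) = ∏ s ∈ T, (v i - s * v 2) := by
  simp [lineProd]

theorem eval_lineProd_eq_one {v : Fin 3 → ℝ} (hi : v i = 1) (h2 : v 2 = 0) :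
    eval v (lineProd T i) = 1 := by
  simp [eval_lineProd, hi, h2]

theorem isHomogeneous_lineProd : (lineProd T i).IsHomogeneous #T := by
  unfold lineProd
  simpa using IsHomogeneous.prod T _ (fun _ => 1) fun s _ =>
    (isHomogeneous_X ℝ i).sub (by simpa using (isHomogeneous_C _ s).mul (isHomogeneous_X ℝ 2))

theorem pderiv_lineProd_of_ne {m : Fin 3} (hmi : m ≠ i) (hm2 : m ≠ 2) :
    pderiv m (lineProd T i) = 0 :=
  Finset.prod_induction _ (fun q => pderiv m q = 0) (fun a b ha hb => by simp [ha, hb])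
    pderiv_one fun s _ => by simp [pderiv_X_of_ne hmi.symm, pderiv_X_of_ne hm2.symm]

variable {i}

theorem lineProd_ne_zero (hi : i ≠ 2) : lineProd T i ≠ 0 := by
  intro h
  simpa [h] using eval_lineProd_eq_one T i (v := fun m => if m = 2 then 0 else 1) (by simp [hi]) rfl

theorem not_X_two_dvd_lineProd (hi : i ≠ 2) : ¬ (X 2 : S) ∣ lineProd T i :=
  not_dvd_of_eval_eq_zero (fun m => if m = 2 then 0 else 1) (by simp)
    (by rw [eval_lineProd_eq_one T i (by simp [hi]) rfl]; exact one_ne_zero)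

end lineProd

section Logarithmic

variable {i i' : Fin 3} {T T' : Finset ℝ} {δ : Derivation ℝ S S}

theorem X_two_dvd_apply_X_two (hi : i ≠ 2) (hi' : i' ≠ 2)
    (hδ : δ (X 2 * lineProd T i * lineProd T' i') = 0) : (X 2 : S) ∣ δ (X 2) :=
  X_prime.dvd_derivation_of_dvd_derivation_mul δ
    (X_prime.not_dvd_mul (not_X_two_dvd_lineProd T hi) (not_X_two_dvd_lineProd T' hi'))
    (by rw [← mul_assoc, hδ]; exact dvd_zero _)

theorem line_dvd_apply_line (hi : i ≠ 2) (hi' : i' ≠ 2) (hii' : i ≠ i')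
    (hδ : δ (X 2 * lineProd T i * lineProd T' i') = 0) {s : ℝ} (hs : s ∈ T) :
    X i - C s * X 2 ∣ δ (X i - C s * X 2) := by
  obtain ⟨t, ht⟩ := Infinite.exists_notMem_finset T'
  let v : Fin 3 → ℝ := fun m => if m = i then s else if m = 2 then 1 else t
  have hv : v i = s ∧ v 2 = 1 ∧ v i' = t := by simp [v, hi.symm, hii'.symm, hi']
  have hsplit : X 2 * lineProd T i * lineProd T' i'
      = (X i - C s * X 2) * (X 2 * (∏ r ∈ T.erase s, (X i - C r * X 2)) * lineProd T' i') := by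
    rw [lineProd, ← mul_prod_erase T _ hs]
    ring
  refine (prime_X_sub_C_mul_X hi s).dvd_derivation_of_dvd_derivation_mul δ
    (not_dvd_of_eval_eq_zero v (by simp [hv]) ?_) (by rw [← hsplit, hδ]; exact dvd_zero _)
  simp only [map_mul, eval_X, eval_lineProd, map_prod, map_sub, eval_C, hv, mul_one]
  refine mul_ne_zero (mul_ne_zero one_ne_zero ?_) ?_ <;> rw [prod_ne_zero_iff] <;>
    intro r hr <;> rw [sub_ne_zero]
  · exact (ne_of_mem_erase hr).symm
  · exact fun h => ht (h ▸ hr)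

theorem X_two_mul_lineProd_dvd (hi : i ≠ 2) (hi' : i' ≠ 2) (hii' : i ≠ i')
    (hδ : δ (X 2 * lineProd T i * lineProd T' i') = 0) :
    X 2 * lineProd T i ∣ X i * δ (X 2) - X 2 * δ (X i) := by
  have hlines : lineProd T i ∣ X i * δ (X 2) - X 2 * δ (X i) := by
    refine prod_dvd_of_isRelPrime (fun s _ r _ hsr => ?_) fun s hs => ?_
    · refine (prime_X_sub_C_mul_X hi s).irreducible.isRelPrime_iff_not_dvd.mpr
        (not_dvd_of_eval_eq_zero (fun m => if m = i then s else 1) (by simp [hi.symm]) ?_)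
      simpa [hi.symm, sub_eq_zero] using hsr
    · obtain ⟨c, hc⟩ := line_dvd_apply_line hi hi' hii' hδ hs
      have hline : δ (X i - C s * X 2) = δ (X i) - C s * δ (X 2) := by
        simp [Derivation.leibniz]
      refine ⟨δ (X 2) - X 2 * c, ?_⟩
      linear_combination X 2 * hline - X 2 * hc
  have hX2 : (X 2 : S) ∣ X i * δ (X 2) - X 2 * δ (X i) :=
    dvd_sub (dvd_mul_of_dvd_right (X_two_dvd_apply_X_two hi hi' hδ) _) (dvd_mul_right _ _)
  exact ((X_prime : Prime (X 2 : S)).irreducible.isRelPrime_iff_not_dvd.mpr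
    (not_X_two_dvd_lineProd T hi)).mul_dvd hX2 hlines

end Logarithmic

def gridForm (T₀ T₁ : Finset ℝ) : S := X 2 * lineProd T₀ 0 * lineProd T₁ 1

def gridDerivation (T₀ T₁ : Finset ℝ) : Fin 2 → Derivation ℝ S S :=
  ![factorDerivation (lineProd T₀ 0) (1 + #T₀ + #T₁) 0,
    factorDerivation (lineProd T₁ 1) (1 + #T₀ + #T₁) 1]

section Grid

variable (T₀ T₁ : Finset ℝ)

theorem isHomogeneous_gridForm : (gridForm T₀ T₁).IsHomogeneous (1 + #T₀ + #T₁) :=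
  ((isHomogeneous_X ℝ 2).mul (isHomogeneous_lineProd T₀ 0)).mul (isHomogeneous_lineProd T₁ 1)

theorem gridForm_ne_zero : gridForm T₀ T₁ ≠ 0 :=
  mul_ne_zero (mul_ne_zero (X_ne_zero 2) (lineProd_ne_zero T₀ (by decide)))
    (lineProd_ne_zero T₁ (by decide))

theorem pderiv_zero_gridForm :
    pderiv 0 (gridForm T₀ T₁) = X 2 * lineProd T₁ 1 * pderiv 0 (lineProd T₀ 0) := by
  simp only [gridForm, Derivation.leibniz, smul_eq_mul, pderiv_X, ne_eq, Fin.reduceEq,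
    not_false_eq_true, Pi.single_eq_of_ne, pderiv_lineProd_of_ne, mul_zero, add_zero, zero_add]
  ring

theorem pderiv_one_gridForm :
    pderiv 1 (gridForm T₀ T₁) = X 2 * lineProd T₀ 0 * pderiv 1 (lineProd T₁ 1) := by
  simp [gridForm, pderiv_lineProd_of_ne]

theorem gridDerivation_mem (m : Fin 2) : gridDerivation T₀ T₁ m ∈ D0 (gridForm T₀ T₁) := by
  fin_cases m <;> refine factorDerivation_apply_eq_zero (isHomogeneous_gridForm T₀ T₁) ?_
  · rw [pderiv_zero_gridForm, gridForm]; ring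
  · rw [pderiv_one_gridForm, gridForm]; ring

theorem linearIndependent_gridDerivation : LinearIndependent S (gridDerivation T₀ T₁) := by
  rw [Fintype.linearIndependent_iff]
  intro g hg
  rw [Fin.forall_fin_two]
  have hX (m : Fin 3) := congr($hg (X m))
  simp only [Fin.sum_univ_two, gridDerivation, Derivation.add_apply, Derivation.smul_apply,
    factorDerivation_apply, eulerDerivation_X, Matrix.cons_val_zero, Matrix.cons_val_one,
    smul_eq_mul, Derivation.zero_apply] at hX
  have h0 := hX 0
  have h1 := hX 1
  have h2 := hX 2
  simp only [Nat.cast_add, Nat.cast_one, pderiv_X, Pi.single_eq_same, mul_one, ne_eq,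
    Fin.reduceEq, not_false_eq_true, Pi.single_eq_of_ne, mul_zero, sub_zero] at h0 h1 h2
  have hG : g 0 * pderiv 0 (lineProd T₀ 0) + g 1 * pderiv 1 (lineProd T₁ 1) = 0 :=
    mul_right_cancel₀ (X_ne_zero 2) (by linear_combination h2)
  have hn : (1 + #T₀ + #T₁ : S) ≠ 0 := by exact_mod_cast (by omega : 1 + #T₀ + #T₁ ≠ 0)
  constructor
  · have h : (1 + #T₀ + #T₁ : S) * lineProd T₀ 0 * g 0 = 0 := by
      linear_combination X 0 * hG - h0
    simpa [hn, lineProd_ne_zero T₀ (by decide : (0 : Fin 3) ≠ 2)] using h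
  · have h : (1 + #T₀ + #T₁ : S) * lineProd T₁ 1 * g 1 = 0 := by
      linear_combination X 1 * hG - h1
    simpa [hn, lineProd_ne_zero T₁ (by decide : (1 : Fin 3) ≠ 2)] using h

variable {T₀ T₁} in
theorem degree_mul_apply_X_two_of_apply_gridForm_eq_zero {δ : Derivation ℝ S S} {u₀ u₁ : S}
    (hδ : δ (gridForm T₀ T₁) = 0)
    (hu₀ : X 0 * δ (X 2) - X 2 * δ (X 0) = X 2 * lineProd T₀ 0 * u₀)
    (hu₁ : X 1 * δ (X 2) - X 2 * δ (X 1) = X 2 * lineProd T₁ 1 * u₁) :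
    (1 + #T₀ + #T₁ : S) * δ (X 2)
      = X 2 * (u₀ * pderiv 0 (lineProd T₀ 0) + u₁ * pderiv 1 (lineProd T₁ 1)) := by
  have hchain := derivation_eq_sum_pderiv_mul δ (gridForm T₀ T₁)
  have heuler := (isHomogeneous_gridForm T₀ T₁).sum_X_mul_pderiv
  rw [Fin.sum_univ_three, pderiv_zero_gridForm, pderiv_one_gridForm, hδ] at hchain
  rw [Fin.sum_univ_three, pderiv_zero_gridForm, pderiv_one_gridForm] at heuler
  simp only [gridForm, nsmul_eq_mul, Nat.cast_add, Nat.cast_one] at hchain heuler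
  refine mul_left_cancel₀ (gridForm_ne_zero T₀ T₁) ?_
  rw [gridForm]
  linear_combination (-δ (X 2)) * heuler - X 2 * hchain
    + X 2 * lineProd T₁ 1 * pderiv 0 (lineProd T₀ 0) * hu₀
    + X 2 * lineProd T₀ 0 * pderiv 1 (lineProd T₁ 1) * hu₁

variable {T₀ T₁} in
theorem exists_sum_smul_gridDerivation_eq {δ : Derivation ℝ S S}
    (hδ : δ ∈ D0 (gridForm T₀ T₁)) : ∃ a : Fin 2 → S, ∑ m, a m • gridDerivation T₀ T₁ m = δ := by
  have hδ' : δ (X 2 * lineProd T₀ 0 * lineProd T₁ 1) = 0 := hδ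
  obtain ⟨u₀, hu₀⟩ := X_two_mul_lineProd_dvd (i := 0) (i' := 1) (by decide) (by decide)
    (by decide) hδ'
  obtain ⟨u₁, hu₁⟩ := X_two_mul_lineProd_dvd (i := 1) (i' := 0) (T := T₁) (T' := T₀)
    (by decide) (by decide) (by decide) (by rw [mul_right_comm]; exact hδ')
  have hz := degree_mul_apply_X_two_of_apply_gridForm_eq_zero hδ' hu₀ hu₁
  have hcoord (m : Fin 3) : u₀ * gridDerivation T₀ T₁ 0 (X m) + u₁ * gridDerivation T₀ T₁ 1 (X m)
      = (1 + #T₀ + #T₁ : S) * δ (X m) := by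
    simp only [gridDerivation, Matrix.cons_val_zero, Matrix.cons_val_one, factorDerivation_apply,
      eulerDerivation_X]
    fin_cases m <;> simp only [Fin.zero_eta, Fin.mk_one, Fin.reduceFinMk, pderiv_X_self,
      pderiv_X_of_ne, ne_eq, Fin.reduceEq, not_false_eq_true, Nat.cast_add, Nat.cast_one]
    · refine mul_left_cancel₀ (X_ne_zero 2) ?_
      linear_combination (1 + #T₀ + #T₁ : S) * hu₀ - X 0 * hz
    · refine mul_left_cancel₀ (X_ne_zero 2) ?_
      linear_combination (1 + #T₀ + #T₁ : S) * hu₁ - X 1 * hz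
    · linear_combination -hz
  have hn : C (1 + #T₀ + #T₁ : ℝ)⁻¹ * (1 + #T₀ + #T₁ : S) = 1 := by
    rw [show (1 + #T₀ + #T₁ : S) = C (1 + #T₀ + #T₁ : ℝ) by simp, ← map_mul,
      inv_mul_cancel₀ (by positivity), map_one]
  refine ⟨fun m => C (1 + #T₀ + #T₁ : ℝ)⁻¹ * ![u₀, u₁] m, derivation_ext fun m => ?_⟩
  simp only [Fin.sum_univ_two, Derivation.add_apply, Derivation.smul_apply, smul_eq_mul,
    Matrix.cons_val_zero, Matrix.cons_val_one]
  rw [mul_assoc, mul_assoc, ← mul_add, hcoord, ← mul_assoc, hn, one_mul]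

end Grid

/-- The grid arrangement is free with exponents `(k+2j+1, k+2j+1)`:
`D_0(g)` has a basis of two derivations homogeneous of degree `k+2j+1`. -/
theorem grid_free (k j : ℕ) :
    ∃ θ : Fin 2 → Derivation ℝ S S,
      (∀ i, θ i ∈ D0 (gridPoly j k)) ∧
      (∀ i, IsHomogDer (θ i) (k + 2 * j + 1)) ∧
      (∀ δ ∈ D0 (gridPoly j k), ∃! a : Fin 2 → S, ∑ i, a i • θ i = δ) := by
  set T : Finset ℝ := (Icc (-(j : ℤ)) (k + j)).image (↑)
  have hcard : #T = k + 2 * j + 1 := by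
    rw [card_image_of_injective _ Int.cast_injective, Int.card_Icc]
    omega
  have hg : gridPoly j k = gridForm T T := by
    rw [gridForm, lineProd, lineProd, prod_image Int.cast_injective.injOn,
      prod_image Int.cast_injective.injOn, mul_assoc, ← prod_mul_distrib]
    rfl
  rw [hg, ← hcard]
  refine ⟨gridDerivation T T, gridDerivation_mem T T, fun m => ?_, fun δ hδ => ?_⟩
  · fin_cases m <;> exact fun i => (isHomogeneous_lineProd T _).factorDerivation_X _ _ _
  · obtain ⟨a, ha⟩ := exists_sum_smul_gridDerivation_eq hδ
    exact ⟨a, ha, fun b hb => funext <| Fintype.linearIndependent_iffₛ.mp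
      (linearIndependent_gridDerivation T T) b a (hb.trans ha.symm)⟩
end
end

section
/- Fix an integer j ≥ 0 and let q be the real quadratic form q(x,y,z) = 3j²·z² + 12j·z² − 4x² − 4xy − 4y² + 12xz + 12yz on ℝ³. Then: (a) q is nondegenerate (its associated symmetric bilinear form is nondegenerate, so the conic C_j = {q = 0} ⊂ ℙ² is smooth); and (b) for each of the six linear forms ℓ ∈ { x − (3+j)·z, y − (3+j)·z, x + y + j·z, x + (j+1)·z, y + (j+1)·z, x + y − (4+j)·z }, the set { p ∈ ℙ² : ℓ vanishes at p and q vanishes at p } consists of exactly one point. (That is, for k = 3 each of the six lines x = (3+j)z, y = (3+j)z, x+y = −jz, x = −(j+1)z, y = −(j+1)z, x+y = (4+j)z is tangent to the smooth conic C_j.) -/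
noncomputable section

lemma vne3 (a b : ℝ) : (![a, b, (2:ℝ)] : Fin 3 → ℝ) ≠ 0 := by
  intro h
  have := congrFun h 2
  simp at this

lemma tangent_helper (ℓ q : (Fin 3 → ℝ) → ℝ) (v₀ : Fin 3 → ℝ) (hv₀ : v₀ ≠ 0)
    (hℓ : ∀ (a : ℝ) (v : Fin 3 → ℝ), ℓ (a • v) = a * ℓ v)
    (hq : ∀ (a : ℝ) (v : Fin 3 → ℝ), q (a • v) = a ^ 2 * q v)
    (h1 : ℓ v₀ = 0) (h2 : q v₀ = 0)
    (huniq : ∀ w : Fin 3 → ℝ, w ≠ 0 → ℓ w = 0 → q w = 0 → ∃ c : ℝ, c ≠ 0 ∧ w = c • v₀) :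
    ∃! p : Projectivization ℝ (Fin 3 → ℝ),
      ∀ (v : Fin 3 → ℝ) (hv : v ≠ 0),
        Projectivization.mk ℝ v hv = p → ℓ v = 0 ∧ q v = 0 := by
  refine ⟨Projectivization.mk ℝ v₀ hv₀, ?_, ?_⟩
  · intro v hv hmk
    rw [Projectivization.mk_eq_mk_iff] at hmk
    obtain ⟨a, ha⟩ := hmk
    have hv' : v = (a : ℝ) • v₀ := by rw [← ha]; rfl
    constructor
    · rw [hv', hℓ, h1, mul_zero]
    · rw [hv', hq, h2, mul_zero]
  · intro p' hp'
    have hw := hp' p'.rep p'.rep_nonzero p'.mk_rep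
    obtain ⟨c, hc, hcw⟩ := huniq p'.rep p'.rep_nonzero hw.1 hw.2
    rw [← p'.mk_rep, Projectivization.mk_eq_mk_iff]
    exact ⟨Units.mk0 c hc, hcw.symm⟩

/-- For `k = 3`, the six unstable lines are tangent to the smooth conic
`C_j = {3j²z² + 12jz² - 4x² - 4xy - 4y² + 12xz + 12yz = 0}`: the quadratic form is
nondegenerate, and each of the six lines meets the conic in exactly one point of `ℙ²`. -/
theorem six_unstable_lines_tangent_to_conic (j : ℕ) :
    let q : (Fin 3 → ℝ) → ℝ := fun v =>
      3 * (j : ℝ) ^ 2 * (v 2) ^ 2 + 12 * (j : ℝ) * (v 2) ^ 2 - 4 * (v 0) ^ 2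
        - 4 * (v 0) * (v 1) - 4 * (v 1) ^ 2 + 12 * (v 0) * (v 2) + 12 * (v 1) * (v 2)
    -- (a) the associated symmetric bilinear form of `q` is nondegenerate
    (∀ u : Fin 3 → ℝ, (∀ v : Fin 3 → ℝ, q (u + v) - q u - q v = 0) → u = 0) ∧
    -- (b) each of the six lines meets the conic `{q = 0}` in exactly one point
    (∀ ℓ ∈ ({fun v => v 0 - ((3 : ℝ) + j) * v 2,
              fun v => v 1 - ((3 : ℝ) + j) * v 2,
              fun v => v 0 + v 1 + (j : ℝ) * v 2,
              fun v => v 0 + ((j : ℝ) + 1) * v 2,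
              fun v => v 1 + ((j : ℝ) + 1) * v 2,
              fun v => v 0 + v 1 - ((4 : ℝ) + j) * v 2} :
              Set ((Fin 3 → ℝ) → ℝ)),
      ∃! p : Projectivization ℝ (Fin 3 → ℝ),
        ∀ (v : Fin 3 → ℝ) (hv : v ≠ 0),
          Projectivization.mk ℝ v hv = p → ℓ v = 0 ∧ q v = 0) := by
  intro q
  constructor
  · intro u h
    have h0 := h ![1,0,0]
    have h1 := h ![0,1,0]
    have h2 := h ![0,0,1]
    simp only [q, Pi.add_apply, Matrix.cons_val_zero, Matrix.cons_val_one, Matrix.head_cons,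
      Matrix.cons_val_two, Matrix.tail_cons] at h0 h1 h2
    ring_nf at h0 h1 h2
    have e01 : u 0 = u 1 := by linarith
    have e02 : u 2 = u 0 := by linarith
    have key : ((j:ℝ)+2)^2 * u 0 = 0 := by
      linear_combination (1/6) * h2 - ((j:ℝ)^2 + 4*j) * e02 + 2 * e01
    have hu0 : u 0 = 0 := by
      rcases mul_eq_zero.mp key with h | h
      · exact absurd h (by positivity)
      · exact h
    funext i
    fin_cases i <;> simp <;> linarith
  · intro ℓ hmem
    have hqhom : ∀ (a : ℝ) (v : Fin 3 → ℝ), q (a • v) = a ^ 2 * q v := by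
      intro a v
      simp only [q, Pi.smul_apply, smul_eq_mul]
      ring
    simp only [Set.mem_insert_iff, Set.mem_singleton_iff] at hmem
    rcases hmem with rfl | rfl | rfl | rfl | rfl | rfl
    · refine tangent_helper _ q (![6 + 2*(j:ℝ), -(j:ℝ), 2]) (vne3 _ _)
        (fun a v => by simp only [Pi.smul_apply, smul_eq_mul]; ring) hqhom ?_ ?_ ?_
      · simp [Matrix.cons_val_two]; ring
      · simp only [q, Matrix.cons_val_zero, Matrix.cons_val_one, Matrix.head_cons,
          Matrix.cons_val_two, Matrix.tail_cons]; ring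
      · intro w hw hl hqw
        simp only [q] at hqw
        have hx : w 0 = ((3:ℝ) + j) * w 2 := by linarith
        rw [hx] at hqw
        have hr : 2 * w 1 + (j:ℝ) * w 2 = 0 := by
          have key : (2 * w 1 + (j:ℝ) * w 2) ^ 2 = 0 := by linear_combination -hqw
          exact pow_eq_zero_iff (by norm_num) |>.mp key
        have hz : w 2 ≠ 0 := by
          intro h0
          apply hw
          rw [h0] at hx hr
          ring_nf at hx hr
          funext i
          fin_cases i <;> simp <;> linarith
        refine ⟨w 2 / 2, div_ne_zero hz two_ne_zero, ?_⟩
        funext i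
        fin_cases i <;> simp [Matrix.cons_val_two]
        · linear_combination hx
        · linear_combination (1/2) * hr
    · refine tangent_helper _ q (![-(j:ℝ), 6 + 2*(j:ℝ), 2]) (vne3 _ _)
        (fun a v => by simp only [Pi.smul_apply, smul_eq_mul]; ring) hqhom ?_ ?_ ?_
      · simp [Matrix.cons_val_two]; ring
      · simp only [q, Matrix.cons_val_zero, Matrix.cons_val_one, Matrix.head_cons,
          Matrix.cons_val_two, Matrix.tail_cons]; ring
      · intro w hw hl hqw
        simp only [q] at hqw
        have hx : w 1 = ((3:ℝ) + j) * w 2 := by linarith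
        rw [hx] at hqw
        have hr : 2 * w 0 + (j:ℝ) * w 2 = 0 := by
          have key : (2 * w 0 + (j:ℝ) * w 2) ^ 2 = 0 := by linear_combination -hqw
          exact pow_eq_zero_iff (by norm_num) |>.mp key
        have hz : w 2 ≠ 0 := by
          intro h0
          apply hw
          rw [h0] at hx hr
          ring_nf at hx hr
          funext i
          fin_cases i <;> simp <;> linarith
        refine ⟨w 2 / 2, div_ne_zero hz two_ne_zero, ?_⟩
        funext i
        fin_cases i <;> simp [Matrix.cons_val_two]
        · linear_combination (1/2) * hr
        · linear_combination hx
    · refine tangent_helper _ q (![-(j:ℝ), -(j:ℝ), 2]) (vne3 _ _)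
        (fun a v => by simp only [Pi.smul_apply, smul_eq_mul]; ring) hqhom ?_ ?_ ?_
      · simp [Matrix.cons_val_two]; ring
      · simp only [q, Matrix.cons_val_zero, Matrix.cons_val_one, Matrix.head_cons,
          Matrix.cons_val_two, Matrix.tail_cons]; ring
      · intro w hw hl hqw
        simp only [q] at hqw
        have hx : w 1 = -(w 0) - (j:ℝ) * w 2 := by linarith
        rw [hx] at hqw
        have hr : 2 * w 0 + (j:ℝ) * w 2 = 0 := by
          have key : (2 * w 0 + (j:ℝ) * w 2) ^ 2 = 0 := by linear_combination -hqw
          exact pow_eq_zero_iff (by norm_num) |>.mp key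
        have hz : w 2 ≠ 0 := by
          intro h0
          apply hw
          rw [h0] at hx hr
          ring_nf at hx hr
          funext i
          fin_cases i <;> simp <;> linarith
        refine ⟨w 2 / 2, div_ne_zero hz two_ne_zero, ?_⟩
        funext i
        fin_cases i <;> simp [Matrix.cons_val_two]
        · linear_combination (1/2) * hr
        · linear_combination hx - (1/2) * hr
    · refine tangent_helper _ q (![-2*(j:ℝ) - 2, (j:ℝ) + 4, 2]) (vne3 _ _)
        (fun a v => by simp only [Pi.smul_apply, smul_eq_mul]; ring) hqhom ?_ ?_ ?_
      · simp [Matrix.cons_val_two]; ring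
      · simp only [q, Matrix.cons_val_zero, Matrix.cons_val_one, Matrix.head_cons,
          Matrix.cons_val_two, Matrix.tail_cons]; ring
      · intro w hw hl hqw
        simp only [q] at hqw
        have hx : w 0 = -((j:ℝ) + 1) * w 2 := by linarith
        rw [hx] at hqw
        have hr : 2 * w 1 - ((j:ℝ) + 4) * w 2 = 0 := by
          have key : (2 * w 1 - ((j:ℝ) + 4) * w 2) ^ 2 = 0 := by linear_combination -hqw
          exact pow_eq_zero_iff (by norm_num) |>.mp key
        have hz : w 2 ≠ 0 := by
          intro h0
          apply hw
          rw [h0] at hx hr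
          ring_nf at hx hr
          funext i
          fin_cases i <;> simp <;> linarith
        refine ⟨w 2 / 2, div_ne_zero hz two_ne_zero, ?_⟩
        funext i
        fin_cases i <;> simp [Matrix.cons_val_two]
        · linear_combination hx
        · linear_combination (1/2) * hr
    · refine tangent_helper _ q (![(j:ℝ) + 4, -2*(j:ℝ) - 2, 2]) (vne3 _ _)
        (fun a v => by simp only [Pi.smul_apply, smul_eq_mul]; ring) hqhom ?_ ?_ ?_
      · simp [Matrix.cons_val_two]; ring
      · simp only [q, Matrix.cons_val_zero, Matrix.cons_val_one, Matrix.head_cons,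
          Matrix.cons_val_two, Matrix.tail_cons]; ring
      · intro w hw hl hqw
        simp only [q] at hqw
        have hx : w 1 = -((j:ℝ) + 1) * w 2 := by linarith
        rw [hx] at hqw
        have hr : 2 * w 0 - ((j:ℝ) + 4) * w 2 = 0 := by
          have key : (2 * w 0 - ((j:ℝ) + 4) * w 2) ^ 2 = 0 := by linear_combination -hqw
          exact pow_eq_zero_iff (by norm_num) |>.mp key
        have hz : w 2 ≠ 0 := by
          intro h0
          apply hw
          rw [h0] at hx hr
          ring_nf at hx hr
          funext i
          fin_cases i <;> simp <;> linarith
        refine ⟨w 2 / 2, div_ne_zero hz two_ne_zero, ?_⟩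
        funext i
        fin_cases i <;> simp [Matrix.cons_val_two]
        · linear_combination (1/2) * hr
        · linear_combination hx
    · refine tangent_helper _ q (![(j:ℝ) + 4, (j:ℝ) + 4, 2]) (vne3 _ _)
        (fun a v => by simp only [Pi.smul_apply, smul_eq_mul]; ring) hqhom ?_ ?_ ?_
      · simp [Matrix.cons_val_two]; ring
      · simp only [q, Matrix.cons_val_zero, Matrix.cons_val_one, Matrix.head_cons,
          Matrix.cons_val_two, Matrix.tail_cons]; ring
      · intro w hw hl hqw
        simp only [q] at hqw
        have hx : w 1 = ((4:ℝ) + j) * w 2 - w 0 := by linarith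
        rw [hx] at hqw
        have hr : 2 * w 0 - ((j:ℝ) + 4) * w 2 = 0 := by
          have key : (2 * w 0 - ((j:ℝ) + 4) * w 2) ^ 2 = 0 := by linear_combination -hqw
          exact pow_eq_zero_iff (by norm_num) |>.mp key
        have hz : w 2 ≠ 0 := by
          intro h0
          apply hw
          rw [h0] at hx hr
          ring_nf at hx hr
          funext i
          fin_cases i <;> simp <;> linarith
        refine ⟨w 2 / 2, div_ne_zero hz two_ne_zero, ?_⟩
        funext i
        fin_cases i <;> simp [Matrix.cons_val_two]
        · linear_combination (1/2) * hr
        · linear_combination hx - (1/2) * hr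
end
end
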